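/- arXiv:2508.06002 — 3 statements merged into one kernel-verified Lean document; each statement's English description precedes it below -/
import Mathlib

section
/- Let n ≥ 1, H ∈ ℝ^{n×n} be symmetric positive definite, b ∈ ℝⁿ, and f(x) = (1/2)xᵀHx + bᵀx with gradient G(x) = Hx + b. Fix x_k ∈ ℝⁿ with G(x_k) ≠ 0 and α_k > 0, and set x_{k+1} = x_k − α_k G(x_k), s_k = x_{k+1} − x_k, y_k = G(x_{k+1}) − G(x_k). Then y_k ≠ 0 and the short KGD step-size equals the short Barzilai–Borwein step: K1s(x_{k+1}; x_k, α_k) = (s_kᵀ y_k)/(y_kᵀ y_k). -/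
/-!
For a quadratic with symmetric Hessian `A`, the exact Taylor expansion
`f (x + s) - f x = ⟪s, G x⟫ + ½ ⟪s, A s⟫` together with `⟪s, G x⟫ = -α ‖G x‖²` for the
gradient step `s = -α G x` shows that the KGD numerator is the curvature `⟪s, A s⟫ = ⟪s, y⟫`,
while its denominator is `‖y‖²`. Positive definiteness makes `⟪s, y⟫ > 0`, so `y ≠ 0`.
-/

open scoped RealInnerProductSpace

theorem Matrix.PosDef.inner_toEuclideanLin_self_pos {n : Type*} [Fintype n] [DecidableEq n]
    {H : Matrix n n ℝ} (hH : H.PosDef) {x : EuclideanSpace ℝ n} (hx : x ≠ 0) :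
    0 < ⟪x, H.toEuclideanLin x⟫ := by
  have := hH.dotProduct_mulVec_pos (x := x.ofLp) (by simpa using hx)
  simpa [Matrix.toLpLin_apply, EuclideanSpace.inner_eq_star_dotProduct, dotProduct_comm]
    using this

section

variable {E : Type*} [NormedAddCommGroup E] [InnerProductSpace ℝ E] {A : E →ₗ[ℝ] E}

theorem LinearMap.IsSymmetric.quadratic_add_sub (hA : A.IsSymmetric) (b x s : E) :
    (1 / 2 * ⟪x + s, A (x + s)⟫ + ⟪b, x + s⟫) - (1 / 2 * ⟪x, A x⟫ + ⟪b, x⟫) =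
      ⟪s, A x + b⟫ + 1 / 2 * ⟪s, A s⟫ := by
  have hsymm : ⟪x, A s⟫ = ⟪s, A x⟫ := by rw [← hA, real_inner_comm]
  simp only [map_add, inner_add_left, inner_add_right, real_inner_comm b s]
  linarith

theorem LinearMap.IsSymmetric.two_mul_kgd_numerator (hA : A.IsSymmetric) {b : E} {f : E → ℝ}
    (hf : ∀ x, f x = 1 / 2 * ⟪x, A x⟫ + ⟪b, x⟫) {G : E → E} (hG : ∀ x, G x = A x + b)
    (x : E) (α : ℝ) :
    2 * (α * ‖G x‖ ^ 2 + (f (x - α • G x) - f x)) = ⟪α • G x, A (α • G x)⟫ := by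
  have hdescent : ⟪-(α • G x), G x⟫ = -(α * ‖G x‖ ^ 2) := by
    rw [inner_neg_left, real_inner_smul_left, real_inner_self_eq_norm_sq]
  rw [sub_eq_add_neg x, hf, hf, hA.quadratic_add_sub, ← hG, hdescent, map_neg, inner_neg_neg]
  ring

end

theorem stmt_1_general {n : ℕ}
    (H : Matrix (Fin n) (Fin n) ℝ) (hH : H.PosDef)
    (b : EuclideanSpace ℝ (Fin n))
    (f : EuclideanSpace ℝ (Fin n) → ℝ)
    (hf : ∀ x, f x = (1 / 2) * ⟪x, Matrix.toEuclideanLin H x⟫ + ⟪b, x⟫)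
    (G : EuclideanSpace ℝ (Fin n) → EuclideanSpace ℝ (Fin n))
    (hG : ∀ x, G x = Matrix.toEuclideanLin H x + b)
    (xk : EuclideanSpace ℝ (Fin n)) (hGk : G xk ≠ 0)
    (αk : ℝ) (hαk : 0 < αk)
    (xk1 sk yk : EuclideanSpace ℝ (Fin n))
    (hx : xk1 = xk - αk • G xk)
    (hs : sk = xk1 - xk) (hy : yk = G xk1 - G xk) :
    yk ≠ 0 ∧
      2 * (αk * ‖G xk‖ ^ 2 + (f xk1 - f xk)) / ‖G xk1 - G xk‖ ^ 2 =
        ⟪sk, yk⟫ / ⟪yk, yk⟫ := by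
  have hsymm : H.toEuclideanLin.IsSymmetric :=
    Matrix.isSymmetric_toEuclideanLin_iff.mpr hH.isHermitian
  set d := αk • G xk
  have hsk : sk = -d := by rw [hs, hx, sub_sub_cancel_left]
  have hyk : yk = H.toEuclideanLin sk := by
    rw [hy, hG, hG, hs, map_sub, add_sub_add_right_eq_sub]
  have hcurv : ⟪sk, yk⟫ = ⟪d, H.toEuclideanLin d⟫ := by rw [hyk, hsk, map_neg, inner_neg_neg]
  have hd : d ≠ 0 := smul_ne_zero hαk.ne' hGk
  have hcurv_pos : 0 < ⟪sk, yk⟫ := hcurv ▸ hH.inner_toEuclideanLin_self_pos hd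
  refine ⟨fun h => by simp [h] at hcurv_pos, ?_⟩
  rw [hx, hsymm.two_mul_kgd_numerator hf hG, ← hcurv, ← hx, ← hy, real_inner_self_eq_norm_sq]

/-- For the strongly convex quadratic `f(x) = (1/2)xᵀHx + bᵀx` with gradient
`G(x) = Hx + b`, the short KGD step-size equals the short Barzilai–Borwein step. -/
theorem stmt_1 {n : ℕ} (hn : 1 ≤ n)
    (H : Matrix (Fin n) (Fin n) ℝ) (hH : H.PosDef)
    (b : EuclideanSpace ℝ (Fin n))
    (f : EuclideanSpace ℝ (Fin n) → ℝ)
    (hf : ∀ x, f x = (1 / 2) * ⟪x, Matrix.toEuclideanLin H x⟫ + ⟪b, x⟫)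
    (G : EuclideanSpace ℝ (Fin n) → EuclideanSpace ℝ (Fin n))
    (hG : ∀ x, G x = Matrix.toEuclideanLin H x + b)
    (xk : EuclideanSpace ℝ (Fin n)) (hGk : G xk ≠ 0)
    (αk : ℝ) (hαk : 0 < αk)
    (xk1 sk yk : EuclideanSpace ℝ (Fin n))
    (hx : xk1 = xk - αk • G xk)
    (hs : sk = xk1 - xk) (hy : yk = G xk1 - G xk) :
    yk ≠ 0 ∧
      2 * (αk * ‖G xk‖ ^ 2 + (f xk1 - f xk)) / ‖G xk1 - G xk‖ ^ 2 =
        ⟪sk, yk⟫ / ⟪yk, yk⟫ :=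
  stmt_1_general H hH b f hf G hG xk hGk αk hαk xk1 sk yk hx hs hy
end

section
/- Let n ≥ 1, H ∈ ℝ^{n×n} be symmetric positive definite, b ∈ ℝⁿ, f(x) = (1/2)xᵀHx + bᵀx with gradient G(x) = Hx + b, unique minimizer x* = −H⁻¹b, and condition number κ = λ_max(H)/λ_min(H). Let x₀ ∈ ℝⁿ, α₀ > 0, and define x_{k+1} = x_k − α_k G(x_k) where for k ≥ 1 the step is the short Barzilai–Borwein step α_k = (s_{k−1}ᵀ y_{k−1})/(y_{k−1}ᵀ y_{k−1}) with s_{k−1} = x_k − x_{k−1}, y_{k−1} = G(x_k) − G(x_{k−1}). If G(x_k) ≠ 0 for all k, then x_k converges to x* at least R-linearly with rate 1 − 1/κ: there exists a constant C > 0 such that ‖x_k − x*‖ ≤ C (1 − 1/κ)^k for all k ≥ 0. -/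
/-!
In an orthonormal eigenbasis of `H` the gradient coordinates evolve by
`c_{k+1,i} = (1 - α_k λ_i) c_{k,i}`, and the short BB step `α_{k+1} = Σ λ c² / Σ λ² c²` lies in
`[1/λ_max, 1/λ_min]`, so every factor `|1 - α_k λ_i|` with `k ≥ 1` is at most `κ`. The key
observation is that when the coordinates with eigenvalue below `λ_i` carry at most `r c_{k,i}²`,
`r = 1 - 1/κ`, the next factor `|1 - α_{k+1} λ_i|` is at most `r`; otherwise `c_{k,i}²` is
controlled by those lower coordinates. Induction along the eigenvalues then shows that every
`c_{k,i}²` is `O(r^{2k})`, and `‖x_k - x*‖ ≤ ‖G(x_k)‖ / λ_min`. If all eigenvalues coincide, the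
first BB step is exact and `G(x_2) = 0`, which the hypotheses exclude.
-/

open scoped RealInnerProductSpace
open Filter Asymptotics Finset

lemma isBigO_pow_of_le_max {u v : ℕ → ℝ} {q : ℝ} (hq : 0 < q) (hu : ∀ k, 0 ≤ u k)
    (hv : v =O[atTop] (q ^ ·)) (h : ∀ᶠ k in atTop, u (k + 2) ≤ max (q * u (k + 1)) (v k)) :
    u =O[atTop] (q ^ ·) := by
  obtain ⟨E, hE⟩ := hv.bound
  obtain ⟨N, hN⟩ := eventually_atTop.1 (h.and hE)
  set C := max (max (u N / q ^ N) (u (N + 1) / q ^ (N + 1))) (E / q ^ 2)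
  have hind : ∀ k, u (N + k) ≤ C * q ^ (N + k) ∧ u (N + k + 1) ≤ C * q ^ (N + k + 1) := by
    intro k
    induction k with
    | zero =>
      constructor
      · rw [← div_le_iff₀ (by positivity)]; exact (le_max_left _ _).trans (le_max_left _ _)
      · rw [← div_le_iff₀ (by positivity)]; exact (le_max_right _ _).trans (le_max_left _ _)
    | succ k ih =>
      refine ⟨ih.2, ?_⟩
      obtain ⟨hu2, hvk⟩ := hN (N + k) (by omega)
      rw [Real.norm_eq_abs, norm_pow, Real.norm_of_nonneg hq.le] at hvk
      have hEC : E ≤ C * q ^ 2 := by rw [← div_le_iff₀ (by positivity)]; exact le_max_right _ _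
      calc u (N + (k + 1) + 1) = u (N + k + 2) := rfl
        _ ≤ max (q * u (N + k + 1)) (v (N + k)) := hu2
        _ ≤ C * q ^ (N + (k + 1) + 1) := by
          apply max_le
          · calc q * u (N + k + 1) ≤ q * (C * q ^ (N + k + 1)) := by gcongr; exact ih.2
              _ = _ := by ring
          · calc v (N + k) ≤ E * q ^ (N + k) := (le_abs_self _).trans hvk
              _ ≤ C * q ^ 2 * q ^ (N + k) := by gcongr
              _ = _ := by ring
  refine IsBigO.of_bound C (eventually_atTop.2 ⟨N, fun k hk => ?_⟩)
  obtain ⟨j, rfl⟩ := Nat.exists_eq_add_of_le hk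
  rw [Real.norm_of_nonneg (hu _), norm_pow, Real.norm_of_nonneg hq.le]
  exact (hind j).1

lemma exists_pos_forall_abs_le_of_isBigO_sq {u : ℕ → ℝ} {r : ℝ} (hr : 0 < r)
    (h : (fun k => u k ^ 2) =O[atTop] ((r ^ 2) ^ ·)) : ∃ C, 0 < C ∧ ∀ k, |u k| ≤ C * r ^ k := by
  have h' : (u ^ 2) =O[atTop] ((fun k : ℕ => r ^ k) ^ 2) := by
    convert h using 1 <;> funext k
    · rfl
    · rw [Pi.pow_apply, ← pow_mul, ← pow_mul, mul_comm]
  obtain ⟨C, hC, hCk⟩ := bound_of_isBigO_nat_atTop (h'.of_pow two_ne_zero)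
  refine ⟨C, hC, fun k => ?_⟩
  simpa [abs_of_pos hr] using hCk (pow_pos hr k).ne'

section Coordinates

variable {ι : Type*} [Fintype ι] {d : ι → ℝ} {m M : ℝ}

/-- The short BB step `gᵀHg / gᵀH²g`, for `g` with coordinates `c` in an eigenbasis of `H` with
eigenvalues `d`. -/
noncomputable def bbStep (d c : ι → ℝ) : ℝ := (∑ j, d j * c j ^ 2) / ∑ j, d j ^ 2 * c j ^ 2

noncomputable def massBelow (d c : ι → ℝ) (i : ι) : ℝ := ∑ j with d j < d i, c j ^ 2

lemma sum_mul_sq_pos (hd : ∀ j, 0 < d j) {c : ι → ℝ} (hc : c ≠ 0) :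
    0 < ∑ j, d j * c j ^ 2 := by
  obtain ⟨i, hi⟩ := Function.ne_iff.1 hc
  exact lt_of_lt_of_le (mul_pos (hd i) (sq_pos_of_ne_zero hi))
    (single_le_sum (f := fun j => d j * c j ^ 2)
      (fun j _ => mul_nonneg (hd j).le (sq_nonneg _)) (mem_univ i))

lemma mul_sum_mul_sq_le (hmd : ∀ j, m ≤ d j) (hd : ∀ j, 0 ≤ d j) (c : ι → ℝ) :
    m * ∑ j, d j * c j ^ 2 ≤ ∑ j, d j ^ 2 * c j ^ 2 := by
  rw [mul_sum]
  exact sum_le_sum fun j _ => by nlinarith [hmd j, mul_nonneg (hd j) (sq_nonneg (c j))]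

lemma sum_sq_mul_sq_le (hdM : ∀ j, d j ≤ M) (hd : ∀ j, 0 ≤ d j) (c : ι → ℝ) :
    ∑ j, d j ^ 2 * c j ^ 2 ≤ M * ∑ j, d j * c j ^ 2 := by
  rw [mul_sum]
  exact sum_le_sum fun j _ => by nlinarith [hdM j, mul_nonneg (hd j) (sq_nonneg (c j))]

lemma bbStep_mem_Icc (hm : 0 < m) (hmd : ∀ i, m ≤ d i) (hdM : ∀ i, d i ≤ M) {c : ι → ℝ}
    (hc : c ≠ 0) : bbStep d c ∈ Set.Icc M⁻¹ m⁻¹ := by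
  have hd : ∀ j, 0 < d j := fun j => hm.trans_le (hmd j)
  have hN := sum_mul_sq_pos hd hc
  have hlow := mul_sum_mul_sq_le hmd (fun j => (hd j).le) c
  have hup := sum_sq_mul_sq_le hdM (fun j => (hd j).le) c
  have hD : 0 < ∑ j, d j ^ 2 * c j ^ 2 := lt_of_lt_of_le (by positivity) hlow
  obtain ⟨i, -⟩ := Function.ne_iff.1 hc
  have hM : 0 < M := (hd i).trans_le (hdM i)
  constructor
  · rw [bbStep, le_div_iff₀ hD, inv_mul_le_iff₀ hM]; exact hup
  · rw [bbStep, div_le_iff₀ hD, ← div_eq_inv_mul, le_div_iff₀ hm, mul_comm]; exact hlow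

lemma bbStep_pos (hd : ∀ j, 0 < d j) {c : ι → ℝ} (hc : c ≠ 0) : 0 < bbStep d c :=
  div_pos (sum_mul_sq_pos hd hc) (sum_mul_sq_pos (d := (d · ^ 2)) (fun j => pow_pos (hd j) 2) hc)

lemma abs_one_sub_bbStep_mul_le (hm : 0 < m) (hmd : ∀ i, m ≤ d i) (hdM : ∀ i, d i ≤ M)
    {c : ι → ℝ} (hc : c ≠ 0) {i : ι} (hi : massBelow d c i ≤ (1 - m / M) * c i ^ 2) :
    |1 - bbStep d c * d i| ≤ 1 - m / M := by
  have hd : ∀ j, 0 < d j := fun j => hm.trans_le (hmd j)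
  have hM : 0 < M := (hd i).trans_le (hdM i)
  set N := ∑ j, d j * c j ^ 2
  set D := ∑ j, d j ^ 2 * c j ^ 2
  have hN : 0 < N := sum_mul_sq_pos hd hc
  have hlow : m * N ≤ D := mul_sum_mul_sq_le hmd (fun j => (hd j).le) c
  have hup : D ≤ M * N := sum_sq_mul_sq_le hdM (fun j => (hd j).le) c
  have hD : 0 < D := lt_of_lt_of_le (by positivity) hlow
  have hr : 0 ≤ 1 - m / M := by
    rw [sub_nonneg, div_le_one hM]; exact (hmd i).trans (hdM i)
  -- only the coordinates with smaller eigenvalue can push `d i * N` above `D`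
  have hexcess : d i * N - D ≤ d i ^ 2 * massBelow d c i := by
    rw [massBelow, sum_filter, mul_sum, mul_sum, ← sum_sub_distrib]
    refine sum_le_sum fun j _ => ?_
    split_ifs with hj
    · nlinarith [mul_nonneg (sq_nonneg (d i - d j)) (sq_nonneg (c j)),
        mul_nonneg (mul_pos (hd i) (hd j)).le (sq_nonneg (c j))]
    · nlinarith [mul_nonneg (hd j).le (sq_nonneg (c j))]
  have hci : d i ^ 2 * c i ^ 2 ≤ D :=
    single_le_sum (f := fun j => d j ^ 2 * c j ^ 2) (fun j _ => by positivity) (mem_univ i)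
  have hform : 1 - bbStep d c * d i = (D - d i * N) / D := by
    rw [show bbStep d c = N / D from rfl]; field_simp
  rw [hform, abs_le, le_div_iff₀ hD, div_le_iff₀ hD]
  constructor
  · nlinarith [mul_le_mul_of_nonneg_left hi (sq_nonneg (d i))]
  · have : m / M * D ≤ d i * N := by
      calc m / M * D ≤ m / M * (M * N) := by gcongr
        _ = m * N := by field_simp
        _ ≤ d i * N := by gcongr; exact hmd i
    nlinarith

lemma abs_one_sub_mul_le_div {a t : ℝ} (hm : 0 < m) (ha : a ∈ Set.Icc M⁻¹ m⁻¹)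
    (ht : t ∈ Set.Icc m M) : |1 - a * t| ≤ M / m := by
  have hM : 0 < M := hm.trans_le (ht.1.trans ht.2)
  have hat : a * t ≤ M / m := by
    rw [div_eq_inv_mul]
    exact mul_le_mul ha.2 ht.2 (hm.le.trans ht.1) (by positivity)
  have h1 : 1 ≤ M / m := by rw [le_div_iff₀ hm, one_mul]; exact ht.1.trans ht.2
  have ha0 : 0 ≤ a * t := mul_nonneg ((inv_pos.2 hM).le.trans ha.1) (hm.le.trans ht.1)
  rw [abs_le]; constructor <;> linarith

variable {c : ℕ → ι → ℝ} {α : ℕ → ℝ}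

/-- `c k` are the coordinates of the `k`-th gradient of the BB method in an eigenbasis with
eigenvalues `d`; the first step `α 0` is arbitrary. -/
structure IsBBIteration (d : ι → ℝ) (α : ℕ → ℝ) (c : ℕ → ι → ℝ) : Prop where
  coord_succ : ∀ k i, c (k + 1) i = (1 - α k * d i) * c k i
  step_succ : ∀ k, α (k + 1) = bbStep d (c k)
  ne_zero : ∀ k, c k ≠ 0

namespace IsBBIteration

variable (h : IsBBIteration d α c) (hm : 0 < m) (hmd : ∀ i, m ≤ d i) (hdM : ∀ i, d i ≤ M)
include h hm hmd hdM

lemma lt : m < M := by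
  by_contra! hMm
  have hdm : ∀ j, d j ≤ m := fun j => (hdM j).trans hMm
  have hα1 : α 1 = m⁻¹ := by
    obtain ⟨hlow, hup⟩ := bbStep_mem_Icc hm hmd hdm (h.ne_zero 0)
    exact (h.step_succ 0).trans (le_antisymm hup hlow)
  apply h.ne_zero 2
  funext j
  rw [h.coord_succ, hα1, le_antisymm (hdm j) (hmd j), inv_mul_cancel₀ hm.ne', sub_self, zero_mul,
    Pi.zero_apply]

lemma sq_coord_le_max (hmM : m < M) {k : ℕ} (hk : k ≠ 0) (i : ι) :
    c (k + 2) i ^ 2 ≤ max ((1 - m / M) ^ 2 * c (k + 1) i ^ 2)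
      ((M / m) ^ 4 / (1 - m / M) * massBelow d (c k) i) := by
  have hr : 0 < 1 - m / M := by
    rw [sub_pos, div_lt_one (hm.trans hmM)]; exact hmM
  have hfac : ∀ l, (1 - α (l + 1) * d i) ^ 2 ≤ (M / m) ^ 2 := fun l => by
    have := abs_le.1 <| abs_one_sub_mul_le_div hm
      (h.step_succ l ▸ bbStep_mem_Icc hm hmd hdM (h.ne_zero l)) ⟨hmd i, hdM i⟩
    exact sq_le_sq' this.1 this.2
  by_cases hbelow : massBelow d (c k) i ≤ (1 - m / M) * c k i ^ 2
  · refine le_max_of_le_left ?_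
    have := abs_le.1 <| abs_one_sub_bbStep_mul_le hm hmd hdM (h.ne_zero k) hbelow
    rw [h.coord_succ, mul_pow, h.step_succ]
    exact mul_le_mul_of_nonneg_right (sq_le_sq' this.1 this.2) (sq_nonneg _)
  · -- `c k i` is dominated by the lower coordinates, and two steps enlarge it by at most `(M/m)^4`
    refine le_max_of_le_right ?_
    obtain ⟨p, rfl⟩ := Nat.exists_eq_add_one_of_ne_zero hk
    have hsmall : c (p + 1) i ^ 2 ≤ massBelow d (c (p + 1)) i / (1 - m / M) := by
      rw [le_div_iff₀ hr]; linarith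
    calc c (p + 1 + 2) i ^ 2
        = (1 - α (p + 2) * d i) ^ 2 * (1 - α (p + 1) * d i) ^ 2 * c (p + 1) i ^ 2 := by
          rw [h.coord_succ, h.coord_succ (p + 1)]; ring
      _ ≤ (M / m) ^ 2 * (M / m) ^ 2 * (massBelow d (c (p + 1)) i / (1 - m / M)) :=
          mul_le_mul (mul_le_mul (hfac _) (hfac p) (sq_nonneg _) (sq_nonneg _)) hsmall
            (sq_nonneg _) (by positivity)
      _ = _ := by ring

lemma sq_coord_isBigO (i : ι) : (fun k => c k i ^ 2) =O[atTop] (((1 - m / M) ^ 2) ^ ·) := by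
  have hmM := h.lt hm hmd hdM
  have hr : 0 < 1 - m / M := by
    rw [sub_pos, div_lt_one (hm.trans hmM)]; exact hmM
  have hwf : WellFounded (fun j i : ι => d j < d i) :=
    @Finite.wellFounded_of_trans_of_irrefl _ _ _ ⟨fun _ _ _ => lt_trans⟩ ⟨fun _ => lt_irrefl _⟩
  induction i using hwf.induction with
  | _ i ih =>
  have hbelow : (fun k => massBelow d (c k) i) =O[atTop] (((1 - m / M) ^ 2) ^ ·) := by
    have := IsBigO.sum (s := univ.filter (fun j => d j < d i)) fun j hj => ih j (mem_filter.1 hj).2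
    simpa [massBelow, Finset.sum_fn] using this
  refine isBigO_pow_of_le_max (pow_pos hr 2) (fun k => sq_nonneg _)
    (hbelow.const_mul_left ((M / m) ^ 4 / (1 - m / M))) ?_
  filter_upwards [eventually_ne_atTop 0] with k hk
  exact h.sq_coord_le_max hm hmd hdM hmM hk i

lemma sum_sq_isBigO : (fun k => ∑ i, c k i ^ 2) =O[atTop] (((1 - m / M) ^ 2) ^ ·) := by
  simpa [Finset.sum_fn] using IsBigO.sum fun i (_ : i ∈ univ) => h.sq_coord_isBigO hm hmd hdM i

end IsBBIteration

end Coordinates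

section Eigenbasis

variable {E ι : Type*} [NormedAddCommGroup E] [InnerProductSpace ℝ E] [Fintype ι]
  (B : OrthonormalBasis ι ℝ E) {T : E →ₗ[ℝ] E} {e : ι → ℝ} {m M : ℝ}

lemma OrthonormalBasis.mul_norm_le_norm_apply (hT : ∀ v j, ⟪B j, T v⟫ = e j * ⟪B j, v⟫)
    (hm : 0 ≤ m) (hme : ∀ j, m ≤ e j) (v : E) : m * ‖v‖ ≤ ‖T v‖ := by
  refine (pow_le_pow_iff_left₀ (by positivity) (norm_nonneg _) two_ne_zero).1 ?_
  rw [mul_pow, ← B.sum_sq_inner_right, ← B.sum_sq_inner_right, mul_sum]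
  refine sum_le_sum fun j _ => ?_
  rw [hT, mul_pow]
  gcongr
  exact hme j

lemma OrthonormalBasis.inner_div_inner_eq_bbStep (hT : ∀ v j, ⟪B j, T v⟫ = e j * ⟪B j, v⟫)
    (v : E) : ⟪v, T v⟫ / ⟪T v, T v⟫ = bbStep e (fun j => ⟪B j, v⟫) := by
  rw [bbStep, ← B.sum_inner_mul_inner, ← B.sum_inner_mul_inner]
  congr 1 <;> refine sum_congr rfl fun j _ => ?_ <;>
    rw [real_inner_comm (B j), hT] <;> ring

theorem OrthonormalBasis.exists_norm_gradient_le_of_bb (hT : ∀ v j, ⟪B j, T v⟫ = e j * ⟪B j, v⟫)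
    (hm : 0 < m) (hme : ∀ j, m ≤ e j) (heM : ∀ j, e j ≤ M)
    {b : E} {G : E → E} (hG : ∀ x, G x = T x + b) {x : ℕ → E} {α : ℕ → ℝ} (hα0 : 0 < α 0)
    (hGk : ∀ k, G (x k) ≠ 0) (hstep : ∀ k, x (k + 1) = x k - α k • G (x k))
    (hBB : ∀ k, α (k + 1) = ⟪x (k + 1) - x k, G (x (k + 1)) - G (x k)⟫ /
        ⟪G (x (k + 1)) - G (x k), G (x (k + 1)) - G (x k)⟫) :
    ∃ C, 0 < C ∧ ∀ k, ‖G (x k)‖ ≤ C * (1 - m / M) ^ k := by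
  set c : ℕ → ι → ℝ := fun k j => ⟪B j, G (x k)⟫
  have hs : ∀ k, x (k + 1) - x k = (-α k) • G (x k) := fun k => by
    rw [hstep, neg_smul]; abel
  have hy : ∀ k, G (x (k + 1)) - G (x k) = (-α k) • T (G (x k)) := fun k => by
    rw [← map_smul, ← hs, map_sub, hG, hG, add_sub_add_right_eq_sub]
  have hstep_eq : ∀ k, α k ≠ 0 → α (k + 1) = bbStep e (c k) := fun k hk => by
    have hk2 : -α k * -α k ≠ 0 := mul_ne_zero (neg_ne_zero.2 hk) (neg_ne_zero.2 hk)
    rw [hBB, hs, hy, real_inner_smul_left, real_inner_smul_right, real_inner_smul_left,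
      real_inner_smul_right, ← mul_assoc, ← mul_assoc, mul_div_mul_left _ _ hk2,
      B.inner_div_inner_eq_bbStep hT]
  have hne : ∀ k, c k ≠ 0 := fun k hc => hGk k <| by
    rw [← norm_eq_zero, ← sq_eq_zero_iff, ← B.sum_sq_inner_right]
    simp [c, funext_iff] at hc
    simp [hc]
  have hpos : ∀ k, 0 < α k := fun k => by
    induction k with
    | zero => exact hα0
    | succ k ih => rw [hstep_eq k ih.ne']; exact bbStep_pos (fun j => hm.trans_le (hme j)) (hne k)
  have hiter : IsBBIteration e α c :=
    { coord_succ := fun k j => by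
        simp only [c]
        rw [sub_eq_iff_eq_add'.1 (hy k), inner_add_right, real_inner_smul_right, hT]
        ring
      step_succ := fun k => hstep_eq k (hpos k).ne'
      ne_zero := hne }
  have hmM := hiter.lt hm hme heM
  obtain ⟨C, hC, hCk⟩ := exists_pos_forall_abs_le_of_isBigO_sq
    (sub_pos.2 ((div_lt_one (hm.trans hmM)).2 hmM)) (by
      simpa [c, B.sum_sq_inner_right] using hiter.sum_sq_isBigO hm hme heM)
  exact ⟨C, hC, fun k => by simpa using hCk k⟩

end Eigenbasis

lemma Matrix.IsHermitian.inner_eigenvectorBasis_toEuclideanLin {ι : Type*} [Fintype ι]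
    [DecidableEq ι] {H : Matrix ι ι ℝ} (hH : H.IsHermitian) (v : EuclideanSpace ℝ ι) (j : ι) :
    ⟪hH.eigenvectorBasis j, Matrix.toEuclideanLin H v⟫ =
      hH.eigenvalues j * ⟪hH.eigenvectorBasis j, v⟫ := by
  rw [← Matrix.isSymmetric_toEuclideanLin_iff.2 hH, ← real_inner_smul_left]
  congr 1
  ext i
  simpa [Matrix.toLpLin_apply] using congrFun (hH.mulVec_eigenvectorBasis j) i

theorem stmt_4_general {n : ℕ}
    (H : Matrix (Fin n) (Fin n) ℝ) (hH : H.PosDef)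
    (b : EuclideanSpace ℝ (Fin n))
    (G : EuclideanSpace ℝ (Fin n) → EuclideanSpace ℝ (Fin n))
    (hG : ∀ x, G x = Matrix.toEuclideanLin H x + b)
    (xs : EuclideanSpace ℝ (Fin n)) (hxs : Matrix.toEuclideanLin H xs = -b)
    (κ : ℝ) (hκ : κ = (⨆ i, hH.1.eigenvalues i) / (⨅ i, hH.1.eigenvalues i))
    (x : ℕ → EuclideanSpace ℝ (Fin n)) (α : ℕ → ℝ)
    (hα0 : 0 < α 0)
    (hGk : ∀ k, G (x k) ≠ 0)
    (hstep : ∀ k, x (k + 1) = x k - α k • G (x k))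
    (hBB : ∀ k, α (k + 1) =
      ⟪x (k + 1) - x k, G (x (k + 1)) - G (x k)⟫ /
        ⟪G (x (k + 1)) - G (x k), G (x (k + 1)) - G (x k)⟫) :
    ∃ C : ℝ, 0 < C ∧ ∀ k : ℕ, ‖x k - xs‖ ≤ C * (1 - 1 / κ) ^ k := by
  have : Nonempty (Fin n) := by
    by_contra hempty
    exact hGk 0 (by ext i; exact (hempty ⟨i⟩).elim)
  set e := hH.1.eigenvalues
  obtain ⟨i₀, hi₀⟩ := exists_eq_ciInf_of_finite (f := e)
  set m := ⨅ i, e i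
  have hm : 0 < m := hi₀ ▸ hH.eigenvalues_pos i₀
  have hme : ∀ j, m ≤ e j := ciInf_le (Finite.bddBelow_range e)
  have hbasis := hH.1.inner_eigenvectorBasis_toEuclideanLin
  obtain ⟨C, hC, hCk⟩ := hH.1.eigenvectorBasis.exists_norm_gradient_le_of_bb hbasis hm hme
    (le_ciSup (Finite.bddAbove_range e)) hG hα0 hGk hstep hBB
  refine ⟨m⁻¹ * C, by positivity, fun k => ?_⟩
  have herr : m * ‖x k - xs‖ ≤ ‖G (x k)‖ := by
    have := hH.1.eigenvectorBasis.mul_norm_le_norm_apply hbasis hm.le hme (x k - xs)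
    rwa [map_sub, hxs, sub_neg_eq_add, ← hG] at this
  rw [hκ, one_div_div, mul_assoc, ← div_eq_inv_mul, le_div_iff₀' hm]
  exact herr.trans (hCk k)

/-- R-linear convergence of the short Barzilai–Borwein gradient method on a
strongly convex quadratic with rate `1 - 1/κ`, `κ = λ_max(H)/λ_min(H)`. -/
theorem stmt_4 {n : ℕ} (hn : 1 ≤ n)
    (H : Matrix (Fin n) (Fin n) ℝ) (hH : H.PosDef)
    (b : EuclideanSpace ℝ (Fin n))
    (f : EuclideanSpace ℝ (Fin n) → ℝ)
    (hf : ∀ x, f x = (1 / 2) * ⟪x, Matrix.toEuclideanLin H x⟫ + ⟪b, x⟫)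
    (G : EuclideanSpace ℝ (Fin n) → EuclideanSpace ℝ (Fin n))
    (hG : ∀ x, G x = Matrix.toEuclideanLin H x + b)
    (xs : EuclideanSpace ℝ (Fin n)) (hxs : Matrix.toEuclideanLin H xs = -b)
    (κ : ℝ) (hκ : κ = (⨆ i, hH.1.eigenvalues i) / (⨅ i, hH.1.eigenvalues i))
    (x : ℕ → EuclideanSpace ℝ (Fin n)) (α : ℕ → ℝ)
    (hα0 : 0 < α 0)
    (hGk : ∀ k, G (x k) ≠ 0)
    (hstep : ∀ k, x (k + 1) = x k - α k • G (x k))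
    (hBB : ∀ k, α (k + 1) =
      ⟪x (k + 1) - x k, G (x (k + 1)) - G (x k)⟫ /
        ⟪G (x (k + 1)) - G (x k), G (x (k + 1)) - G (x k)⟫) :
    ∃ C : ℝ, 0 < C ∧ ∀ k : ℕ, ‖x k - xs‖ ≤ C * (1 - 1 / κ) ^ k :=
  stmt_4_general H hH b G hG xs hxs κ hκ x α hα0 hGk hstep hBB
end

section
/- Let f : ℝⁿ → ℝ be continuously differentiable, x₀ ∈ ℝⁿ, and suppose the sublevel set Ω = { x ∈ ℝⁿ : f(x) ≤ f(x₀) } is compact. Let η > 0, integer M ≥ 0, and constants 0 < c ≤ A. Suppose the sequences (x_k) ⊂ ℝⁿ and (α_k) ⊂ [c, A] satisfy x_{k+1} = x_k − α_k ∇f(x_k) and f(x_{k+1}) ≤ max_{0 ≤ j ≤ min(k, M)} f(x_{k−j}) − η α_k ‖∇f(x_k)‖² for every k ≥ 0. If moreover f has only finitely many stationary points in Ω, then the sequence (x_k) converges. -/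
/-!
The window maximum `W k = max_{0 ≤ j ≤ min k M} f (x (k - j))` is nonincreasing, so the iterates
stay in `Ω` and `W k` converges to some `L`. Following Grippo, Lampariello and Lucidi one walks
backwards from the index `ℓ k ∈ [k - M, k]` at which `W k` is attained: if `f (x (i + 1)) → L`
along a sequence of indices, the decrease condition forces
`η α_i ‖∇f (x i)‖² ≤ W i - f (x (i + 1)) → 0`, so the step `x (i + 1) - x i` tends to `0` and, by
uniform continuity of `f` on `Ω`, also `f (x i) → L`. After `M + 1` such steps every index is
covered, hence `∇f (x k) → 0` and `x (k + 1) - x k → 0`. Every cluster point is then a stationary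
point in `Ω`, and a sequence in a compact set with vanishing steps and finitely many cluster
points converges: near one isolated cluster point it can no longer jump to another.
-/

open Filter Topology Metric

theorem UniformContinuousOn.tendsto_dist_comp {ι E F : Type*} [PseudoMetricSpace E]
    [PseudoMetricSpace F] {f : E → F} {K : Set E} (hf : UniformContinuousOn f K) {l : Filter ι}
    {u v : ι → E} (hu : ∀ i, u i ∈ K) (hv : ∀ i, v i ∈ K)
    (huv : Tendsto (fun i => dist (u i) (v i)) l (𝓝 0)) :
    Tendsto (fun i => dist (f (u i)) (f (v i))) l (𝓝 0) :=
  tendsto_uniformity_iff_dist_tendsto_zero.1 <| Tendsto.comp hf <| tendsto_inf.2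
    ⟨tendsto_uniformity_iff_dist_tendsto_zero.2 huv,
      tendsto_principal.2 <| Eventually.of_forall fun i => Set.mk_mem_prod (hu i) (hv i)⟩

theorem MapClusterPt.eq_of_tendsto_comp {ι X Y : Type*} [TopologicalSpace X] [TopologicalSpace Y]
    [T2Space Y] {l : Filter ι} {x : ι → X} {a : X} {g : X → Y} {b : Y}
    (ha : MapClusterPt a l x) (hg : ContinuousAt g a) (h : Tendsto (g ∘ x) l (𝓝 b)) : g a = b := by
  by_contra hne
  exact ((ha.continuousAt_comp hg).clusterPt.mono h).ne
    (disjoint_iff.1 (disjoint_nhds_nhds.2 hne))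

theorem tendsto_zero_of_mul_sq_le {ι : Type*} {l : Filter ι} {g v : ι → ℝ} {C : ℝ}
    (hC : 0 < C) (hg : ∀ i, 0 ≤ g i) (hle : ∀ i, C * g i ^ 2 ≤ v i)
    (hv : Tendsto v l (𝓝 0)) : Tendsto g l (𝓝 0) := by
  have hsqrt : Tendsto (fun i => √(v i / C)) l (𝓝 0) := by
    simpa using (hv.div_const C).sqrt
  refine tendsto_of_tendsto_of_tendsto_of_le_of_le tendsto_const_nhds hsqrt hg fun i => ?_
  rw [← Real.sqrt_sq (hg i)]
  exact Real.sqrt_le_sqrt ((le_div_iff₀' hC).2 (hle i))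

theorem IsCompact.eventually_mem_of_mapClusterPt_subset {ι X : Type*} [TopologicalSpace X]
    {K U : Set X} (hK : IsCompact K) (hU : IsOpen U) {l : Filter ι} {x : ι → X}
    (hxK : ∀ᶠ i in l, x i ∈ K) (hcl : ∀ a, MapClusterPt a l x → a ∈ U) :
    ∀ᶠ i in l, x i ∈ U := by
  by_contra h
  obtain ⟨a, haK, ha⟩ := (hK.inter_right hU.isClosed_compl).exists_mapClusterPt_of_frequently
    ((not_eventually.1 h).and_eventually hxK |>.mono fun i hi => ⟨hi.2, hi.1⟩)
  exact haK.2 (hcl a ha)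

theorem Set.Finite.exists_pos_le_dist {E : Type*} [MetricSpace E] {S : Set E} (hS : S.Finite)
    (a : E) : ∃ r > 0, ∀ p ∈ S, p ≠ a → r ≤ dist a p := by
  have ha : a ∈ (S \ {a})ᶜ := by simp
  obtain ⟨r, hr, hball⟩ := Metric.mem_nhds_iff.1
    (hS.sdiff.isClosed.isOpen_compl.mem_nhds ha)
  refine ⟨r, hr, fun p hp hpa => not_lt.1 fun hlt => ?_⟩
  exact hball (mem_ball'.2 hlt) ⟨hp, hpa⟩

theorem dist_lt_of_small_steps_near {E : Type*} [PseudoMetricSpace E] {S : Set E} {a : E}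
    {r δ : ℝ} {x : ℕ → E} {N : ℕ} (hsep : ∀ p ∈ S, p ≠ a → r ≤ dist a p) (hδ : 3 * δ ≤ r)
    (hnear : ∀ k ≥ N, x k ∈ thickening δ S ∧ dist (x (k + 1)) (x k) < δ)
    (hN : dist (x N) a < δ) : ∀ k ≥ N, dist (x k) a < δ := by
  intro k hk
  induction k, hk using Nat.le_induction with
  | base => exact hN
  | succ k hk ih =>
    obtain ⟨p, hpS, hp⟩ := mem_thickening_iff.1 (hnear (k + 1) (by omega)).1
    obtain rfl | hpa := eq_or_ne p a
    · exact hp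
    · have htri := dist_triangle4 a (x k) (x (k + 1)) p
      rw [dist_comm a (x k), dist_comm (x k) (x (k + 1))] at htri
      linarith [hsep p hpS hpa, (hnear k hk).2]

theorem tendsto_of_tendsto_dist_succ_of_finite_clusterPts {E : Type*} [MetricSpace E]
    {K S : Set E} (hK : IsCompact K) (hS : S.Finite) {x : ℕ → E} (hxK : ∀ k, x k ∈ K)
    (hcl : ∀ a, MapClusterPt a atTop x → a ∈ S)
    (hstep : Tendsto (fun k => dist (x (k + 1)) (x k)) atTop (𝓝 0)) :
    ∃ a, Tendsto x atTop (𝓝 a) := by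
  obtain ⟨a, -, ha⟩ := hK.exists_mapClusterPt_of_frequently (l := atTop) (Frequently.of_forall hxK)
  obtain ⟨r, hr, hsep⟩ := hS.exists_pos_le_dist a
  refine ⟨a, Metric.tendsto_nhds.2 fun ε hε => ?_⟩
  obtain ⟨δ, hδ, h3δ, hδε⟩ : ∃ δ, 0 < δ ∧ 3 * δ ≤ r ∧ δ ≤ ε :=
    ⟨min ε r / 3, by positivity, by linarith [min_le_right ε r], by linarith [min_le_left ε r]⟩
  have hnear : ∀ᶠ k in atTop, x k ∈ thickening δ S :=
    hK.eventually_mem_of_mapClusterPt_subset isOpen_thickening (Eventually.of_forall hxK)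
      fun b hb => self_subset_thickening hδ S (hcl b hb)
  obtain ⟨N, hN⟩ := eventually_atTop.1 (hnear.and (hstep.eventually (gt_mem_nhds hδ)))
  obtain ⟨k₀, hk₀, hxk₀⟩ := frequently_atTop.1 (ha.frequently (ball_mem_nhds a hδ)) N
  have htrap := dist_lt_of_small_steps_near hsep h3δ (fun k hk => hN k (hk₀.trans hk)) hxk₀
  exact eventually_atTop.2 ⟨k₀, fun k hk => (htrap k hk).trans_le hδε⟩

noncomputable def windowMax (u : ℕ → ℝ) (M k : ℕ) : ℝ :=
  (Finset.range (min k M + 1)).sup' Finset.nonempty_range_add_one fun j => u (k - j)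

section WindowMax

variable {u d : ℕ → ℝ} {M : ℕ} {L : ℝ}

theorem le_windowMax (u : ℕ → ℝ) (M k : ℕ) : u k ≤ windowMax u M k :=
  Finset.le_sup' (fun j => u (k - j)) (Finset.mem_range.2 (Nat.succ_pos _))

theorem windowMax_zero (u : ℕ → ℝ) (M : ℕ) : windowMax u M 0 = u 0 := by
  simp [windowMax]

theorem exists_eq_windowMax (u : ℕ → ℝ) (M k : ℕ) :
    ∃ m ≤ k, k ≤ m + M ∧ u m = windowMax u M k := by
  obtain ⟨j, hj, hmax⟩ := Finset.exists_mem_eq_sup' Finset.nonempty_range_add_one fun j => u (k - j)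
  rw [Finset.mem_range] at hj
  exact ⟨k - j, by omega, by omega, hmax.symm⟩

theorem windowMax_succ_le {k : ℕ} (h : u (k + 1) ≤ windowMax u M k) :
    windowMax u M (k + 1) ≤ windowMax u M k := by
  refine Finset.sup'_le _ _ fun j hj => ?_
  rw [Finset.mem_range] at hj
  rcases j with _ | i
  · exact h
  · rw [show k + 1 - (i + 1) = k - i by omega]
    exact Finset.le_sup' (fun j => u (k - j)) (Finset.mem_range.2 (by omega))

theorem antitone_windowMax (h : ∀ k, u (k + 1) ≤ windowMax u M k) : Antitone (windowMax u M) :=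
  antitone_nat_of_succ_le fun k => windowMax_succ_le (h k)

theorem le_zero_of_le_windowMax (h : ∀ k, u (k + 1) ≤ windowMax u M k) (k : ℕ) : u k ≤ u 0 :=
  (le_windowMax u M k).trans <| (antitone_windowMax h k.zero_le).trans_eq (windowMax_zero u M)

theorem tendsto_decrement_of_tendsto_succ (hd : ∀ k, 0 ≤ d k)
    (hu : ∀ k, u (k + 1) ≤ windowMax u M k - d k) (hW : Tendsto (windowMax u M) atTop (𝓝 L))
    {ψ : ℕ → ℕ} (hψ : Tendsto ψ atTop atTop) (h : Tendsto (fun k => u (ψ k + 1)) atTop (𝓝 L)) :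
    Tendsto (fun k => d (ψ k)) atTop (𝓝 0) :=
  tendsto_of_tendsto_of_tendsto_of_le_of_le tendsto_const_nhds
    (by simpa using (hW.comp hψ).sub h) (fun k => hd (ψ k)) fun k => by linarith [hu (ψ k)]

theorem tendsto_comp_of_tendsto_comp_succ (hd : ∀ k, 0 ≤ d k)
    (hu : ∀ k, u (k + 1) ≤ windowMax u M k - d k) (hW : Tendsto (windowMax u M) atTop (𝓝 L))
    (hcont : ∀ ψ : ℕ → ℕ, Tendsto (fun k => d (ψ k)) atTop (𝓝 0) →
      Tendsto (fun k => u (ψ k + 1) - u (ψ k)) atTop (𝓝 0))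
    {ψ : ℕ → ℕ} (hψ : Tendsto ψ atTop atTop) (h : Tendsto (fun k => u (ψ k + 1)) atTop (𝓝 L)) :
    Tendsto (fun k => u (ψ k)) atTop (𝓝 L) := by
  simpa using h.sub (hcont ψ (tendsto_decrement_of_tendsto_succ hd hu hW hψ h))

theorem tendsto_comp_sub_of_eq_windowMax (hd : ∀ k, 0 ≤ d k)
    (hu : ∀ k, u (k + 1) ≤ windowMax u M k - d k) (hW : Tendsto (windowMax u M) atTop (𝓝 L))
    (hcont : ∀ ψ : ℕ → ℕ, Tendsto (fun k => d (ψ k)) atTop (𝓝 0) →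
      Tendsto (fun k => u (ψ k + 1) - u (ψ k)) atTop (𝓝 0))
    {ℓ : ℕ → ℕ} (hℓ : ∀ k, k ≤ ℓ k + M ∧ u (ℓ k) = windowMax u M k) (j : ℕ) :
    Tendsto (fun k => u (ℓ k - j)) atTop (𝓝 L) := by
  induction j with
  | zero => simpa only [Nat.sub_zero, (hℓ _).2] using hW
  | succ j ih =>
    have hψ : Tendsto (fun k => ℓ k - (j + 1)) atTop atTop :=
      tendsto_atTop_mono (fun k => by have := (hℓ k).1; omega) (tendsto_sub_atTop_nat (M + j + 1))
    refine tendsto_comp_of_tendsto_comp_succ hd hu hW hcont hψ (ih.congr' ?_)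
    filter_upwards [eventually_ge_atTop (M + j + 1)] with k hk
    have := (hℓ k).1
    congr 2
    omega

theorem tendsto_succ_of_eq_windowMax (hd : ∀ k, 0 ≤ d k)
    (hu : ∀ k, u (k + 1) ≤ windowMax u M k - d k) (hW : Tendsto (windowMax u M) atTop (𝓝 L))
    (hcont : ∀ ψ : ℕ → ℕ, Tendsto (fun k => d (ψ k)) atTop (𝓝 0) →
      Tendsto (fun k => u (ψ k + 1) - u (ψ k)) atTop (𝓝 0))
    {ℓ : ℕ → ℕ} (hℓle : ∀ k, ℓ k ≤ k) (hℓ : ∀ k, k ≤ ℓ k + M ∧ u (ℓ k) = windowMax u M k) :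
    Tendsto (fun k => u (k + 1)) atTop (𝓝 L) := by
  refine Metric.tendsto_nhds.2 fun ε hε => ?_
  have hwindow : ∀ᶠ k in atTop, ∀ j : Fin (M + 1), dist (u (ℓ (k + (M + 1)) - j)) L < ε :=
    eventually_all.2 fun j => Metric.tendsto_nhds.1 ((tendsto_comp_sub_of_eq_windowMax hd hu hW
      hcont hℓ j).comp (tendsto_add_atTop_nat (M + 1))) ε hε
  filter_upwards [hwindow] with k hk
  have h₁ := hℓle (k + (M + 1))
  have h₂ := (hℓ (k + (M + 1))).1
  simpa [show ℓ (k + (M + 1)) - (ℓ (k + (M + 1)) - (k + 1)) = k + 1 by omega]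
    using hk ⟨ℓ (k + (M + 1)) - (k + 1), by omega⟩

theorem tendsto_zero_of_le_windowMax_sub (hd : ∀ k, 0 ≤ d k)
    (hu : ∀ k, u (k + 1) ≤ windowMax u M k - d k) (hbdd : BddBelow (Set.range u))
    (hcont : ∀ ψ : ℕ → ℕ, Tendsto (fun k => d (ψ k)) atTop (𝓝 0) →
      Tendsto (fun k => u (ψ k + 1) - u (ψ k)) atTop (𝓝 0)) :
    Tendsto d atTop (𝓝 0) := by
  have hanti := antitone_windowMax fun k => (hu k).trans (sub_le_self _ (hd k))
  obtain ⟨b, hb⟩ := hbdd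
  have hW := tendsto_atTop_ciInf hanti ⟨b, Set.forall_mem_range.2 fun k =>
    (hb (Set.mem_range_self k)).trans (le_windowMax u M k)⟩
  choose ℓ hℓle hℓ using exists_eq_windowMax u M
  exact tendsto_decrement_of_tendsto_succ hd hu hW tendsto_id
    (tendsto_succ_of_eq_windowMax hd hu hW hcont hℓle hℓ)

end WindowMax

section GradientStep

variable {E : Type*} [NormedAddCommGroup E] [InnerProductSpace ℝ E] [CompleteSpace E]

theorem continuous_gradient {f : E → ℝ} (hf : ContDiff ℝ 1 f) : Continuous (gradient f) :=
  (InnerProductSpace.toDual ℝ E).symm.continuous.comp (hf.continuous_fderiv one_ne_zero)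

theorem dist_gradient_step_le {f : E → ℝ} {y : E} {a A : ℝ} (ha : a ∈ Set.Icc 0 A) :
    dist (y - a • gradient f y) y ≤ A * ‖gradient f y‖ := by
  rw [dist_eq_norm, sub_sub_cancel_left, norm_neg, norm_smul, Real.norm_of_nonneg ha.1]
  exact mul_le_mul_of_nonneg_right ha.2 (norm_nonneg _)

end GradientStep

theorem stmt_12_general {n : ℕ} (f : EuclideanSpace ℝ (Fin n) → ℝ) (hf : ContDiff ℝ 1 f)
    (x₀ : EuclideanSpace ℝ (Fin n))
    (hΩ : IsCompact {y : EuclideanSpace ℝ (Fin n) | f y ≤ f x₀})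
    (η : ℝ) (hη : 0 < η) (M : ℕ)
    (c A : ℝ) (hc : 0 < c)
    (x : ℕ → EuclideanSpace ℝ (Fin n)) (α : ℕ → ℝ)
    (hx0 : x 0 = x₀)
    (hα : ∀ k, α k ∈ Set.Icc c A)
    (hstep : ∀ k, x (k + 1) = x k - α k • gradient f (x k))
    (hdec : ∀ k, f (x (k + 1)) ≤
      (Finset.range (min k M + 1)).sup' Finset.nonempty_range_add_one (fun j => f (x (k - j)))
        - η * α k * ‖gradient f (x k)‖ ^ 2)
    (hfin : {y : EuclideanSpace ℝ (Fin n) | f y ≤ f x₀ ∧ gradient f y = 0}.Finite) :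
    ∃ l : EuclideanSpace ℝ (Fin n), Tendsto x atTop (nhds l) := by
  have hα₀ k : α k ∈ Set.Icc 0 A := ⟨hc.le.trans (hα k).1, (hα k).2⟩
  have hd k : 0 ≤ η * α k * ‖gradient f (x k)‖ ^ 2 := by have := (hα₀ k).1; positivity
  have hdesc : ∀ k, f (x (k + 1)) ≤
      windowMax (fun k => f (x k)) M k - η * α k * ‖gradient f (x k)‖ ^ 2 := hdec
  have hxΩ k : f (x k) ≤ f x₀ :=
    hx0 ▸ le_zero_of_le_windowMax (u := fun k => f (x k))
      (fun k => (hdesc k).trans (sub_le_self _ (hd k))) k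
  have hbdd : BddBelow (Set.range fun k => f (x k)) :=
    (hΩ.bddBelow_image hf.continuous.continuousOn).mono
      (Set.range_subset_iff.2 fun k => Set.mem_image_of_mem f (hxΩ k))
  have hgrad {ψ : ℕ → ℕ}
      (h : Tendsto (fun k => η * α (ψ k) * ‖gradient f (x (ψ k))‖ ^ 2) atTop (𝓝 0)) :
      Tendsto (fun k => ‖gradient f (x (ψ k))‖) atTop (𝓝 0) :=
    tendsto_zero_of_mul_sq_le (mul_pos hη hc) (fun k => norm_nonneg _)
      (fun k => by gcongr; exact (hα _).1) h
  have hdist {ψ : ℕ → ℕ} (h : Tendsto (fun k => ‖gradient f (x (ψ k))‖) atTop (𝓝 0)) :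
      Tendsto (fun k => dist (x (ψ k + 1)) (x (ψ k))) atTop (𝓝 0) :=
    squeeze_zero (fun k => dist_nonneg) (fun k => hstep (ψ k) ▸ dist_gradient_step_le (hα₀ _))
      (by simpa using h.const_mul A)
  have hfuc := hΩ.uniformContinuousOn_of_continuous hf.continuous.continuousOn
  have hg : Tendsto (fun k => ‖gradient f (x k)‖) atTop (𝓝 0) :=
    hgrad (ψ := id) <| tendsto_zero_of_le_windowMax_sub hd hdesc hbdd fun ψ h => by
      refine tendsto_zero_iff_norm_tendsto_zero.2 ?_
      simpa [Real.dist_eq, Real.norm_eq_abs] using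
        hfuc.tendsto_dist_comp (fun k => hxΩ _) (fun k => hxΩ _) (hdist (hgrad h))
  have hstationary (a) (ha : MapClusterPt a atTop x) : f a ≤ f x₀ ∧ gradient f a = 0 :=
    ⟨hΩ.isClosed.mem_of_mapClusterPt ha (Eventually.of_forall hxΩ),
      ha.eq_of_tendsto_comp (continuous_gradient hf).continuousAt
        (tendsto_zero_iff_norm_tendsto_zero.2 hg)⟩
  exact tendsto_of_tendsto_dist_succ_of_finite_clusterPts hΩ hfin hxΩ hstationary
    (hdist (ψ := id) hg)

/-- If, in addition to the hypotheses guaranteeing global convergence of the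
nonmonotone gradient iteration, `f` has only finitely many stationary points in the
compact sublevel set `Ω`, then the whole sequence of iterates converges. -/
theorem stmt_12 {n : ℕ} (f : EuclideanSpace ℝ (Fin n) → ℝ) (hf : ContDiff ℝ 1 f)
    (x₀ : EuclideanSpace ℝ (Fin n))
    (hΩ : IsCompact {y : EuclideanSpace ℝ (Fin n) | f y ≤ f x₀})
    (η : ℝ) (hη : 0 < η) (M : ℕ)
    (c A : ℝ) (hc : 0 < c) (hcA : c ≤ A)
    (x : ℕ → EuclideanSpace ℝ (Fin n)) (α : ℕ → ℝ)
    (hx0 : x 0 = x₀)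
    (hα : ∀ k, α k ∈ Set.Icc c A)
    (hstep : ∀ k, x (k + 1) = x k - α k • gradient f (x k))
    (hdec : ∀ k, f (x (k + 1)) ≤
      (Finset.range (min k M + 1)).sup' Finset.nonempty_range_add_one (fun j => f (x (k - j)))
        - η * α k * ‖gradient f (x k)‖ ^ 2)
    (hfin : {y : EuclideanSpace ℝ (Fin n) | f y ≤ f x₀ ∧ gradient f y = 0}.Finite) :
    ∃ l : EuclideanSpace ℝ (Fin n), Tendsto x atTop (nhds l) :=
  stmt_12_general f hf x₀ hΩ η hη M c A hc x α hx0 hα hstep hdec hfin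
end
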